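/- arXiv:2312.08794 — 4 statements merged into one kernel-verified Lean document; each statement's English description precedes it below -/
import Mathlib

section
/- Let R be a field, f(x) ∈ R[x] irreducible, A := R[x]/(f(x)^n), and let a, b, c, d ∈ {0,1,...,n} satisfy b < a < c, b < d < c and a + d = b + c. With M(i) := R[x]/(f(x)^i), the sequence 0 → M(a) --(-p, q)--> M(b) ⊕ M(c) --(g; h)--> M(d) → 0 is exact, where p: M(a) → M(b) and h: M(c) → M(d) are the canonical surjections and q: M(a) → M(c) and g: M(b) → M(d) are the canonical injections (multiplication by the appropriate power of f). -/
set_option synthInstance.maxHeartbeats 1000000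
set_option maxHeartbeats 1000000

namespace Stmt6

variable (R : Type) [Field R] (f : Polynomial R) (n : ℕ)

/-- `A := R[x]/(f^n)`. -/
abbrev A : Type := Polynomial R ⧸ Ideal.span {f ^ n}

/-- The ideal `(f^i)` of `A`. -/
noncomputable abbrev I (i : ℕ) : Ideal (A R f n) :=
  Ideal.span {Ideal.Quotient.mk (Ideal.span {f ^ n}) (f ^ i)}

/-- `M(i) := R[x]/(f^i)`, realized as `A/(f^i)`. -/
abbrev M (i : ℕ) : Type := A R f n ⧸ I R f n i

/-- The canonical surjection `M(a) → M(b)` for `b ≤ a` (reduction mod `f^b`). -/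
noncomputable def canSurj (a b : ℕ) (h : b ≤ a) : M R f n a →ₗ[A R f n] M R f n b :=
  Submodule.liftQ (I R f n a) (I R f n b).mkQ (by
    rw [Submodule.ker_mkQ]
    exact Ideal.span_singleton_le_span_singleton.mpr (map_dvd _ (pow_dvd_pow f h)))

/-- The canonical injection `M(a) → M(c)` for `a ≤ c` (multiplication by `f^{c-a}`). -/
noncomputable def canInj (a c : ℕ) (h : a ≤ c) : M R f n a →ₗ[A R f n] M R f n c :=
  Submodule.liftQ (I R f n a)
    ((I R f n c).mkQ ∘ₗ
      LinearMap.lsmul (A R f n) (A R f n) (Ideal.Quotient.mk (Ideal.span {f ^ n}) (f ^ (c - a))))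
    (by
      rw [Ideal.span_le]
      intro x hx
      rw [Set.mem_singleton_iff] at hx
      subst hx
      rw [SetLike.mem_coe, LinearMap.mem_ker, LinearMap.comp_apply, LinearMap.lsmul_apply,
        smul_eq_mul, Submodule.mkQ_apply, Submodule.Quotient.mk_eq_zero]
      rw [← map_mul, ← pow_add, Nat.sub_add_cancel h]
      exact Ideal.mem_span_singleton_self _)

end Stmt6

namespace Stmt6Aux

open Stmt6

variable (R : Type) [Field R] (f : Polynomial R) (n : ℕ)

noncomputable def pi (i : ℕ) (P : Polynomial R) : M R f n i :=
  (I R f n i).mkQ (Ideal.Quotient.mk _ P)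

lemma pi_surjective (i : ℕ) : Function.Surjective (pi R f n i) := by
  intro x
  obtain ⟨y, rfl⟩ := Submodule.mkQ_surjective _ x
  obtain ⟨P, rfl⟩ := Ideal.Quotient.mk_surjective y
  exact ⟨P, rfl⟩

lemma pi_add (i : ℕ) (P Q : Polynomial R) :
    pi R f n i (P + Q) = pi R f n i P + pi R f n i Q := by
  simp [pi]

lemma pi_sub (i : ℕ) (P Q : Polynomial R) :
    pi R f n i (P - Q) = pi R f n i P - pi R f n i Q := by
  simp [pi]

lemma pi_eq_zero_iff (i : ℕ) (hi : i ≤ n) (P : Polynomial R) :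
    pi R f n i P = 0 ↔ f ^ i ∣ P := by
  rw [pi, Submodule.mkQ_apply, Submodule.Quotient.mk_eq_zero, Ideal.mem_span_singleton]
  constructor
  · rintro ⟨z, hz⟩
    obtain ⟨Q, rfl⟩ := Ideal.Quotient.mk_surjective z
    rw [← map_mul, Ideal.Quotient.eq, Ideal.mem_span_singleton] at hz
    have h1 : f ^ i ∣ P - f ^ i * Q := (pow_dvd_pow f hi).trans hz
    have := dvd_add h1 (Dvd.intro Q rfl)
    simpa using this
  · rintro ⟨Q, rfl⟩
    exact ⟨Ideal.Quotient.mk _ Q, by rw [← map_mul]⟩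

lemma canSurj_pi (a b : ℕ) (h : b ≤ a) (P : Polynomial R) :
    canSurj R f n a b h (pi R f n a P) = pi R f n b P := rfl

lemma canInj_pi (a c : ℕ) (h : a ≤ c) (P : Polynomial R) :
    canInj R f n a c h (pi R f n a P) = pi R f n c (f ^ (c - a) * P) := by
  simp only [canInj, pi, Submodule.mkQ_apply, Submodule.liftQ_apply, LinearMap.comp_apply,
    LinearMap.lsmul_apply, smul_eq_mul, ← map_mul]

end Stmt6Aux



/-- For `b < a < c`, `b < d < c` with `a + d = b + c`, the sequence
`0 → M(a) --(-p,q)--> M(b) ⊕ M(c) --(g;h)--> M(d) → 0` is exact, where `p, h` are the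
canonical surjections and `q, g` the canonical injections. -/
theorem stmt6 (R : Type) [Field R] (f : Polynomial R) (hf : Irreducible f) (n : ℕ)
    (a b c d : ℕ) (hcn : c ≤ n) (hba : b < a) (hac : a < c) (hbd : b < d) (hdc : d < c)
    (habcd : a + d = b + c) :
    Function.Injective
      ⇑((-(Stmt6.canSurj R f n a b hba.le)).prod (Stmt6.canInj R f n a c hac.le)) ∧
    Function.Exact
      ⇑((-(Stmt6.canSurj R f n a b hba.le)).prod (Stmt6.canInj R f n a c hac.le))
      ⇑((Stmt6.canInj R f n b d hbd.le).coprod (Stmt6.canSurj R f n c d hdc.le)) ∧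
    Function.Surjective
      ⇑((Stmt6.canInj R f n b d hbd.le).coprod (Stmt6.canSurj R f n c d hdc.le)) := by
  have han : a ≤ n := (hac.le.trans hcn)
  have hbn : b ≤ n := (hba.le.trans han)
  have hdn : d ≤ n := (hdc.le.trans hcn)
  have hca : c - a = d - b := by omega
  have hf0 : f ≠ 0 := hf.ne_zero
  refine ⟨?_, ?_, ?_⟩
  · rw [← LinearMap.ker_eq_bot, LinearMap.ker_eq_bot']
    intro m hm
    obtain ⟨P, rfl⟩ := Stmt6Aux.pi_surjective R f n a m
    rw [LinearMap.prod_apply] at hm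
    have h2 : Stmt6.canInj R f n a c hac.le (Stmt6Aux.pi R f n a P) = 0 :=
      congrArg Prod.snd hm
    rw [Stmt6Aux.canInj_pi, Stmt6Aux.pi_eq_zero_iff R f n c hcn] at h2
    rw [Stmt6Aux.pi_eq_zero_iff R f n a han]
    have h3 : f ^ (c - a) * f ^ a ∣ f ^ (c - a) * P := by
      rw [← pow_add, Nat.sub_add_cancel hac.le]
      exact h2
    exact (mul_dvd_mul_iff_left (pow_ne_zero _ hf0)).mp h3
  · intro y
    obtain ⟨P, hP⟩ := Stmt6Aux.pi_surjective R f n b y.1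
    obtain ⟨Q, hQ⟩ := Stmt6Aux.pi_surjective R f n c y.2
    have hy : y = (Stmt6Aux.pi R f n b P, Stmt6Aux.pi R f n c Q) := by
      ext <;> simp [hP, hQ]
    subst hy
    constructor
    · intro h0
      rw [LinearMap.coprod_apply, Stmt6Aux.canInj_pi, Stmt6Aux.canSurj_pi,
        ← Stmt6Aux.pi_add, Stmt6Aux.pi_eq_zero_iff R f n d hdn] at h0
      obtain ⟨S, hS⟩ := h0
      refine ⟨Stmt6Aux.pi R f n a (-P + f ^ b * S), ?_⟩
      refine Prod.ext ?_ ?_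
      · show -(Stmt6.canSurj R f n a b hba.le
            (Stmt6Aux.pi R f n a (-P + f ^ b * S))) = Stmt6Aux.pi R f n b P
        rw [Stmt6Aux.canSurj_pi]
        have hzero : Stmt6Aux.pi R f n b (P - (-(-P + f ^ b * S))) = 0 := by
          rw [Stmt6Aux.pi_eq_zero_iff R f n b hbn]
          exact ⟨S, by ring⟩
        rw [Stmt6Aux.pi_sub, sub_eq_zero] at hzero
        rw [show (Stmt6Aux.pi R f n b (-(-P + f ^ b * S)))
            = -(Stmt6Aux.pi R f n b (-P + f ^ b * S)) by simp [Stmt6Aux.pi]] at hzero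
        rw [← hzero]
      · show Stmt6.canInj R f n a c hac.le
            (Stmt6Aux.pi R f n a (-P + f ^ b * S)) = Stmt6Aux.pi R f n c Q
        rw [Stmt6Aux.canInj_pi]
        congr 1
        have h1 : c - a + b = d := by omega
        calc f ^ (c - a) * (-P + f ^ b * S)
            = -(f ^ (d - b) * P) + f ^ d * S := by
              rw [mul_add, mul_neg, hca, ← mul_assoc, ← pow_add,
                show d - b + b = d by omega]
          _ = Q := by rw [← hS]; ring
    · rintro ⟨z, hz⟩
      obtain ⟨Z, rfl⟩ := Stmt6Aux.pi_surjective R f n a z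
      rw [LinearMap.prod_apply] at hz
      have hz1 : -(Stmt6.canSurj R f n a b hba.le (Stmt6Aux.pi R f n a Z))
          = Stmt6Aux.pi R f n b P := congrArg Prod.fst hz
      have hz2 : Stmt6.canInj R f n a c hac.le (Stmt6Aux.pi R f n a Z)
          = Stmt6Aux.pi R f n c Q := congrArg Prod.snd hz
      rw [LinearMap.coprod_apply, ← hz1, ← hz2]
      rw [map_neg, Stmt6Aux.canSurj_pi, Stmt6Aux.canInj_pi, Stmt6Aux.canInj_pi,
        Stmt6Aux.canSurj_pi, hca]
      exact neg_add_cancel _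
  · intro y
    obtain ⟨P, rfl⟩ := Stmt6Aux.pi_surjective R f n d y
    refine ⟨(0, Stmt6Aux.pi R f n c P), ?_⟩
    rw [LinearMap.coprod_apply, map_zero, zero_add, Stmt6Aux.canSurj_pi]
end

section
/- Let s ≥ 2 and let m_1 > m_2 > ... > m_s ≥ 1 and n_1 > n_2 > ... > n_s ≥ 1 be integers with m_1 = n_1. Define X := Σ_{k=1}^s (Σ_{l=1}^k m_k(e_{kl}+e_{lk}) − m_k e_{kk}) and Y := Σ_{k=1}^s (Σ_{l=1}^k n_k(e_{kl}+e_{lk}) − n_k e_{kk}) in M_s(ℤ) (i.e., the symmetric matrices with (i,j)-entry m_{max(i,j)} resp. n_{max(i,j)}). Then X and Y are congruent over ℤ (i.e., there is H ∈ GL_s(ℤ) with HᵀXH = Y) if and only if the multisets {{m_1−m_2, ..., m_{s−1}−m_s, m_s}} and {{n_1−n_2, ..., n_{s−1}−n_s, n_s}} are equal. -/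
/-!
Writing `L` for the lower triangular all-ones matrix, `X = Lᵀ D L` with
`D = diag(m_1 - m_2, …, m_{s-1} - m_s, m_s)`, and likewise for `Y`; since `det L = 1`, the question
reduces to congruence of two positive definite diagonal forms. Permuting coordinates shows that
equal multisets of diagonal entries suffice. Conversely, for every `t` the rank of the lattice
spanned by the vectors `v` with `vᵀ D v ≤ t` is invariant under congruence, and for a positive
integral diagonal `D` these vectors are supported on the coordinates `i` with `D i i ≤ t`, so the
rank is the number of such `i`. These counts determine the multiset of diagonal entries.
-/

open Finset Module Submodule

theorem card_filter_le_eq_card_filter_eq_add {ι : Type*} [Fintype ι] (f : ι → ℤ) (c : ℤ) :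
    #{i | f i ≤ c} = #{i | f i = c} + #{i | f i ≤ c - 1} := by
  rw [← card_filter_add_card_filter_not (fun i => f i = c), filter_filter, filter_filter]
  congr 2 <;> ext i <;> simp only [mem_filter, mem_univ, true_and] <;> omega

theorem exists_perm_of_card_filter_le_eq {ι : Type*} [Fintype ι] {d d' : ι → ℤ}
    (h : ∀ t, #{i | d' i ≤ t} = #{i | d i ≤ t}) : ∃ σ : Equiv.Perm ι, ∀ k, d' k = d (σ k) := by
  have hfiber (c : ℤ) : #{i | d' i = c} = #{i | d i = c} := by
    have := card_filter_le_eq_card_filter_eq_add d c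
    have := card_filter_le_eq_card_filter_eq_add d' c
    have := h c
    have := h (c - 1)
    omega
  let e (c : ℤ) : {i // d' i = c} ≃ {i // d i = c} :=
    Fintype.equivOfCardEq (by rw [Fintype.card_subtype, Fintype.card_subtype, hfiber])
  exact ⟨Equiv.ofFiberEquiv e, fun k => (Equiv.ofFiberEquiv_map e k).symm⟩

namespace Matrix

theorem mulVec_dotProduct_mulVec_mulVec {ι R : Type*} [Fintype ι] [CommRing R]
    (A H : Matrix ι ι R) (v : ι → R) :
    (H *ᵥ v) ⬝ᵥ (A *ᵥ (H *ᵥ v)) = v ⬝ᵥ ((Hᵀ * A * H) *ᵥ v) := by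
  rw [← mulVec_mulVec, ← mulVec_mulVec, dotProduct_mulVec v, vecMul_transpose]

def sublevelSpan {ι R : Type*} [Fintype ι] [CommRing R] [LE R] (A : Matrix ι ι R) (t : R) :
    Submodule R (ι → R) :=
  span R {v | v ⬝ᵥ (A *ᵥ v) ≤ t}

variable {ι R : Type*} [Fintype ι] [DecidableEq ι]

def IsCongruent [CommRing R] (A B : Matrix ι ι R) : Prop :=
  ∃ H : Matrix ι ι R, IsUnit H.det ∧ Hᵀ * A * H = B

namespace IsCongruent

variable [CommRing R] {A B C : Matrix ι ι R}

theorem of_transpose_mul_mul (A : Matrix ι ι R) {H : Matrix ι ι R} (hH : IsUnit H.det) :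
    IsCongruent A (Hᵀ * A * H) :=
  ⟨H, hH, rfl⟩

theorem symm : IsCongruent A B → IsCongruent B A := by
  rintro ⟨H, hH, rfl⟩
  refine ⟨H⁻¹, isUnit_nonsing_inv_det H hH, ?_⟩
  rw [transpose_nonsing_inv, Matrix.mul_assoc, Matrix.mul_assoc, mul_nonsing_inv _ hH,
    Matrix.mul_one, ← Matrix.mul_assoc, nonsing_inv_mul _ (by rwa [det_transpose]),
    Matrix.one_mul]

theorem trans : IsCongruent A B → IsCongruent B C → IsCongruent A C := by
  rintro ⟨H, hH, rfl⟩ ⟨K, hK, rfl⟩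
  exact ⟨H * K, by rw [det_mul]; exact hH.mul hK, by simp only [transpose_mul, Matrix.mul_assoc]⟩

theorem isCongruent_iff {A' B' : Matrix ι ι R} (hA : IsCongruent A A') (hB : IsCongruent B B') :
    IsCongruent A B ↔ IsCongruent A' B' :=
  ⟨fun h => hA.symm.trans (h.trans hB), fun h => hA.trans (h.trans hB.symm)⟩

end IsCongruent

theorem isCongruent_diagonal_comp_perm [CommRing R] (d : ι → R) (σ : Equiv.Perm ι) :
    IsCongruent (diagonal d) (diagonal (d ∘ σ)) := by
  refine ⟨(σ⁻¹).permMatrix R, ?_, ?_⟩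
  · rw [det_permutation]
    exact (Equiv.Perm.sign σ⁻¹).isUnit.map (Int.castRingHom R)
  · rw [transpose_permMatrix, PEquiv.toMatrix_toPEquiv_mul, PEquiv.mul_toMatrix_toPEquiv]
    exact submatrix_diagonal_equiv d σ

theorem IsCongruent.finrank_sublevelSpan_eq [CommRing R] [LE R] {A B : Matrix ι ι R}
    (h : IsCongruent A B) (t : R) :
    finrank R (sublevelSpan B t) = finrank R (sublevelSpan A t) := by
  obtain ⟨H, hH, rfl⟩ := h
  let e := H.toLinearEquiv' (H.invertibleOfIsUnitDet hH)
  have hpre : {v | v ⬝ᵥ ((Hᵀ * A * H) *ᵥ v) ≤ t} = e ⁻¹' {w | w ⬝ᵥ (A *ᵥ w) ≤ t} := by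
    ext v
    have he : e v = H *ᵥ v := toLin'_apply H v
    simp only [Set.mem_ofPred_eq, Set.mem_preimage, he, mulVec_dotProduct_mulVec_mulVec]
  rw [← LinearEquiv.finrank_map_eq e, sublevelSpan, map_span, hpre, LinearEquiv.coe_coe,
    Set.image_preimage_eq _ e.surjective, sublevelSpan]

theorem sublevelSpan_diagonal {d : ι → ℤ} (hd : ∀ i, 0 < d i) (t : ℤ) :
    sublevelSpan (diagonal d) t =
      span ℤ (Set.range fun i : {i // d i ≤ t} => Pi.single i.1 1) := by
  have hform (v : ι → ℤ) : v ⬝ᵥ (diagonal d *ᵥ v) = ∑ i, d i * v i ^ 2 := by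
    simp only [dotProduct, mulVec_diagonal]
    exact sum_congr rfl fun i _ => by ring
  apply le_antisymm
  · rw [sublevelSpan, span_le]
    intro v hv
    have hvanish (i : ι) (hi : t < d i) : v i = 0 := by
      by_contra hvi
      have hsq : 1 ≤ v i ^ 2 := by nlinarith [Int.one_le_abs hvi, sq_abs (v i)]
      have hterm : d i * v i ^ 2 ≤ ∑ j, d j * v j ^ 2 :=
        single_le_sum (fun j _ => mul_nonneg (hd j).le (sq_nonneg (v j))) (mem_univ i)
      have : v ⬝ᵥ (diagonal d *ᵥ v) ≤ t := hv
      nlinarith [hd i, hform v]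
    rw [SetLike.mem_coe, ← univ_sum_single v]
    refine sum_mem fun i _ => ?_
    rcases le_or_gt (d i) t with hi | hi
    · have hei : (Pi.single i 1 : ι → ℤ) ∈
          span ℤ (Set.range fun i : {i // d i ≤ t} => Pi.single i.1 1) :=
        subset_span ⟨⟨i, hi⟩, rfl⟩
      simpa [← Pi.single_smul'] using smul_mem _ (v i) hei
    · simp [hvanish i hi]
  · rw [span_le]
    rintro _ ⟨i, rfl⟩
    refine subset_span ?_
    show _ ≤ t
    rw [hform, sum_eq_single i.1 (fun j _ hj => by simp [hj]) (by simp)]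
    simpa using i.2

theorem finrank_sublevelSpan_diagonal {d : ι → ℤ} (hd : ∀ i, 0 < d i) (t : ℤ) :
    finrank ℤ (sublevelSpan (diagonal d) t) = #{i | d i ≤ t} := by
  have hli : LinearIndependent ℤ fun i : {i // d i ≤ t} => (Pi.single i.1 1 : ι → ℤ) := by
    simpa [Function.comp_def] using
      (Pi.basisFun ℤ ι).linearIndependent.comp _ Subtype.val_injective
  rw [sublevelSpan_diagonal hd, finrank_span_eq_card hli, Fintype.card_subtype]

theorem isCongruent_diagonal_iff {d d' : ι → ℤ} (hd : ∀ i, 0 < d i) (hd' : ∀ i, 0 < d' i) :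
    IsCongruent (diagonal d) (diagonal d') ↔ ∃ σ : Equiv.Perm ι, ∀ k, d' k = d (σ k) := by
  constructor
  · intro h
    refine exists_perm_of_card_filter_le_eq fun t => ?_
    rw [← finrank_sublevelSpan_diagonal hd t, ← finrank_sublevelSpan_diagonal hd' t,
      h.finrank_sublevelSpan_eq]
  · rintro ⟨σ, hσ⟩
    rw [show d' = d ∘ σ from funext hσ]
    exact isCongruent_diagonal_comp_perm d σ

def lowerTriangularOnes (ι R : Type*) [LinearOrder ι] [Zero R] [One R] : Matrix ι ι R :=
  of fun i j => if j ≤ i then 1 else 0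

section LowerTriangularOnes

variable {ι R : Type*} [Fintype ι] [LinearOrder ι] [CommRing R]

theorem det_lowerTriangularOnes : (lowerTriangularOnes ι R).det = 1 := by
  rw [det_of_isLowerTriangular (lowerTriangularOnes ι R) fun i j hij => if_neg (not_le.2 hij)]
  simp [lowerTriangularOnes]

theorem transpose_lowerTriangularOnes_mul_diagonal_mul (δ : ι → R) :
    (lowerTriangularOnes ι R)ᵀ * diagonal δ * lowerTriangularOnes ι R =
      of fun i j => ∑ k with max i j ≤ k, δ k := by
  ext i j
  rw [mul_apply]
  simp only [mul_diagonal, transpose_apply, lowerTriangularOnes, of_apply, sum_filter,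
    max_le_iff]
  refine sum_congr rfl fun k _ => ?_
  by_cases hik : i ≤ k <;> by_cases hjk : j ≤ k <;> simp [hik, hjk]

end LowerTriangularOnes

end Matrix

variable {s : ℕ}

def extendByZero (m : Fin s → ℤ) (k : ℕ) : ℤ :=
  if h : k < s then m ⟨k, h⟩ else 0

def successiveDiff (m : Fin s → ℤ) (k : Fin s) : ℤ :=
  m k - extendByZero m (k + 1)

theorem sum_Ici_successiveDiff (m : Fin s → ℤ) (t : Fin s) :
    ∑ k ∈ Ici t, successiveDiff m k = m t := by
  have hm (k : Fin s) : m k = extendByZero m k := by simp [extendByZero]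
  have hE : extendByZero m s = 0 := by simp [extendByZero]
  calc ∑ k ∈ Ici t, successiveDiff m k
      = ∑ n ∈ Ico (t : ℕ) s, (extendByZero m n - extendByZero m (n + 1)) := by
        rw [← Fin.map_valEmbedding_Ici, sum_map]
        exact sum_congr rfl fun k _ => by rw [successiveDiff, hm]; rfl
    _ = extendByZero m t - extendByZero m s := by
        rw [← neg_sub (extendByZero m s), ← sum_Ico_sub _ t.2.le, ← sum_neg_distrib]
        exact sum_congr rfl fun n _ => (neg_sub _ _).symm
    _ = m t := by rw [hE, sub_zero, hm]

theorem successiveDiff_pos {m : Fin s → ℤ} (hm : StrictAnti m) (hpos : ∀ k, 0 < m k)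
    (k : Fin s) :
    0 < successiveDiff m k := by
  unfold successiveDiff extendByZero
  split_ifs with h
  · exact sub_pos.2 (hm (Fin.lt_def.2 (Nat.lt_succ_self _)))
  · simpa using hpos k

open Matrix in
theorem isCongruent_diagonal_successiveDiff_max (m : Fin s → ℤ) :
    IsCongruent (diagonal (successiveDiff m)) (of fun i j => m (max i j)) := by
  have hL : IsUnit (lowerTriangularOnes (Fin s) ℤ).det := by
    rw [det_lowerTriangularOnes]
    exact isUnit_one
  convert IsCongruent.of_transpose_mul_mul _ hL
  rw [transpose_lowerTriangularOnes_mul_diagonal_mul]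
  ext i j
  rw [of_apply, of_apply, filter_le_eq_Ici, sum_Ici_successiveDiff]

/-- For strictly decreasing positive integer sequences `m_1 > ... > m_s ≥ 1` and
`n_1 > ... > n_s ≥ 1` with `m_1 = n_1`, the symmetric matrices with `(i,j)`-entry
`m_{max(i,j)}` resp. `n_{max(i,j)}` are congruent over `ℤ` if and only if the multisets of
successive differences `{{m_1-m_2, ..., m_{s-1}-m_s, m_s}}` and
`{{n_1-n_2, ..., n_{s-1}-n_s, n_s}}` coincide. -/
theorem stmt7 (s : ℕ) (hs : 2 ≤ s) (m nn : Fin s → ℤ)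
    (hm : StrictAnti m) (hn : StrictAnti nn)
    (hms : 1 ≤ m ⟨s - 1, by omega⟩) (hns : 1 ≤ nn ⟨s - 1, by omega⟩) :
    (∃ H : Matrix (Fin s) (Fin s) ℤ, IsUnit H.det ∧
        H.transpose * (Matrix.of fun i j => m (max i j)) * H =
          Matrix.of fun i j => nn (max i j)) ↔
      ∃ σ : Equiv.Perm (Fin s), ∀ k : Fin s,
        (nn k - if h : (k : ℕ) + 1 < s then nn ⟨(k : ℕ) + 1, h⟩ else 0) =
        (m (σ k) - if h : ((σ k : Fin s) : ℕ) + 1 < s then m ⟨((σ k : Fin s) : ℕ) + 1, h⟩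
          else 0) := by
  have hpos {a : Fin s → ℤ} (ha : StrictAnti a) (hlast : 1 ≤ a ⟨s - 1, by omega⟩) (k : Fin s) :
      0 < a k := by
    have hk : k ≤ ⟨s - 1, by omega⟩ := Fin.le_iff_val_le_val.2 (Nat.le_sub_one_of_lt k.2)
    have := ha.antitone hk
    omega
  calc _ ↔ Matrix.IsCongruent (Matrix.diagonal (successiveDiff m))
          (Matrix.diagonal (successiveDiff nn)) :=
        ((isCongruent_diagonal_successiveDiff_max m).isCongruent_iff
          (isCongruent_diagonal_successiveDiff_max nn)).symm
    _ ↔ _ := Matrix.isCongruent_diagonal_iff (successiveDiff_pos hm (hpos hm hms))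
        (successiveDiff_pos hn (hpos hn hns))
end

section
/- Let R be a field, f(x) ∈ R[x] an irreducible separable polynomial, n ≥ 1, K := R[x]/(f(x)), and A := R[x]/(f(x)^n). Then A admits a K-algebra structure and A ≅ K[y]/(y^n) as K-algebras. -/
/-!
Newton's method in the nilpotent thickening `A = R[x]/(f^n)` lifts the root `x mod f` of `f` to
an honest root `r` of `f` in `A` with `x - r` nilpotent: this is the section `K → A` of
Wedderburn–Malcev. Expanding `f(x) = f(r + (x - r))` shows that `f(x)` is `x - r` times a unit,
so `(x - r)^n = 0`, and `y ↦ x - r` defines a `K`-algebra map `K[y]/(y^n) → A`. Its image contains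
`r` and `x`, hence everything, and both sides have `R`-dimension `n · deg f`.
-/

open Polynomial

namespace Polynomial

variable {R S : Type*} [CommRing R] [CommRing S] [Algebra R S] {P : R[X]}

theorem Separable.isUnit_aeval_derivative_of_isNilpotent (hP : P.Separable) {x : S}
    (hx : IsNilpotent (aeval x P)) : IsUnit (aeval x (derivative P)) := by
  obtain ⟨a, b, hab⟩ := hP
  have hbP' : aeval x b * aeval x (derivative P) = 1 + -(aeval x a * aeval x P) := by
    simpa [eq_add_neg_iff_add_eq, add_comm] using congr(aeval x $hab)
  have hunit : IsUnit (aeval x b * aeval x (derivative P)) := by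
    rw [hbP']
    exact (Commute.all _ _).isNilpotent_mul_left hx |>.neg.isUnit_add_left_of_commute
      isUnit_one (Commute.all _ _)
  exact isUnit_of_mul_isUnit_right hunit

theorem exists_isUnit_aeval_eq_sub_mul {x r : S} (hr : aeval r P = 0)
    (hr' : IsUnit (aeval r (derivative P))) (hxr : IsNilpotent (x - r)) :
    ∃ u, IsUnit u ∧ aeval x P = (x - r) * u := by
  obtain ⟨k, hk⟩ := binomExpansion (P.map (algebraMap R S)) r (x - r)
  refine ⟨aeval r (derivative P) + k * (x - r), ?_, ?_⟩
  · exact (Commute.all _ _).isNilpotent_mul_left hxr |>.isUnit_add_left_of_commute hr'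
      (Commute.all _ _)
  · rw [add_sub_cancel, derivative_map, eval_map_algebraMap, eval_map_algebraMap,
      eval_map_algebraMap, hr] at hk
    rw [hk]; ring

end Polynomial

namespace AdjoinRoot

section CommRing

variable {R : Type*} [CommRing R] {f : R[X]}

theorem exists_aeval_eq_zero_and_root_sub_pow_eq_zero (hf : f.Separable) (n : ℕ) :
    ∃ r : AdjoinRoot (f ^ n), aeval r f = 0 ∧ (root (f ^ n) - r) ^ n = 0 := by
  set x := root (f ^ n)
  have hxn : aeval x f ^ n = 0 := by rw [← map_pow, aeval_eq, mk_self]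
  obtain ⟨r, hxr, hr⟩ := (existsUnique_nilpotent_sub_and_aeval_eq_zero ⟨n, hxn⟩
    (hf.isUnit_aeval_derivative_of_isNilpotent ⟨n, hxn⟩)).exists
  obtain ⟨u, hu, hxu⟩ := exists_isUnit_aeval_eq_sub_mul hr
    (hf.isUnit_aeval_derivative_of_isNilpotent ⟨1, by rw [hr, pow_one]⟩) hxr
  refine ⟨r, hr, (hu.pow n).mul_left_eq_zero.mp ?_⟩
  rw [← mul_pow, ← hxu, hxn]

theorem algHom_surjective_of_root_mem_range {T : Type*} [CommRing T] [Algebra R T]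
    (ψ : T →ₐ[R] AdjoinRoot f) (h : root f ∈ ψ.range) : Function.Surjective ψ :=
  ψ.range_eq_top.mp <| eq_top_iff.2 <|
    adjoinRoot_eq_top (f := f) ▸ Algebra.adjoin_le (Set.singleton_subset_iff.2 h)

end CommRing

theorem finrank_X_pow (R K : Type*) [Field R] [Field K] [Algebra R K] (n : ℕ) :
    Module.finrank R (AdjoinRoot (X ^ n : K[X])) = Module.finrank R K * n := by
  rw [← Module.finrank_mul_finrank R K, (powerBasis (pow_ne_zero n X_ne_zero)).finrank,
    powerBasis_dim, natDegree_X_pow]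

section Field

variable {R : Type*} [Field R] {f : R[X]}

theorem finrank_pow (hf : f ≠ 0) (n : ℕ) :
    Module.finrank R (AdjoinRoot (f ^ n)) = Module.finrank R (AdjoinRoot f) * n := by
  rw [(powerBasis hf).finrank, (powerBasis (pow_ne_zero n hf)).finrank, powerBasis_dim,
    powerBasis_dim, natDegree_pow, mul_comm]

theorem exists_algebra_nonempty_algEquiv_X_pow (hf : Irreducible f) (hsep : f.Separable) (n : ℕ) :
    ∃ _ : Algebra (AdjoinRoot f) (AdjoinRoot (f ^ n)),
      Nonempty (AdjoinRoot (f ^ n) ≃ₐ[AdjoinRoot f] AdjoinRoot (X ^ n : (AdjoinRoot f)[X])) := by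
  have : Fact (Irreducible f) := ⟨hf⟩
  obtain ⟨r, hr, hnil⟩ := exists_aeval_eq_zero_and_root_sub_pow_eq_zero hsep n
  let φ : AdjoinRoot f →ₐ[R] AdjoinRoot (f ^ n) := liftAlgHom f (Algebra.ofId R _) r hr
  let ψ : AdjoinRoot (X ^ n : (AdjoinRoot f)[X]) →ₐ[R] AdjoinRoot (f ^ n) :=
    liftAlgHom _ φ (root (f ^ n) - r) (by simp [hnil])
  have hsurj : Function.Surjective ψ := by
    refine algHom_surjective_of_root_mem_range ψ ⟨root _ + of _ (root f), ?_⟩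
    change ψ (root _ + of _ (root f)) = root (f ^ n)
    rw [map_add, liftAlgHom_root, liftAlgHom_of, show φ (root f) = r from liftAlgHom_root ..,
      sub_add_cancel]
  have : Module.Finite R (AdjoinRoot f) := (powerBasis hf.ne_zero).finite
  have : Module.Finite (AdjoinRoot f) (AdjoinRoot (X ^ n : (AdjoinRoot f)[X])) :=
    (powerBasis (pow_ne_zero n X_ne_zero)).finite
  have : Module.Finite R (AdjoinRoot (X ^ n : (AdjoinRoot f)[X])) := .trans (AdjoinRoot f) _
  have : Module.Finite R (AdjoinRoot (f ^ n)) := (powerBasis (pow_ne_zero n hf.ne_zero)).finite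
  have hinj : Function.Injective ψ :=
    (LinearMap.injective_iff_surjective_of_finrank_eq_finrank (f := ψ.toLinearMap)
      (by rw [finrank_X_pow, finrank_pow hf.ne_zero])).mpr hsurj
  let alg := φ.toRingHom.toAlgebra
  refine ⟨alg, ⟨AlgEquiv.ofRingEquiv (f := (RingEquiv.ofBijective ψ ⟨hinj, hsurj⟩).symm) ?_⟩⟩
  intro k
  rw [RingEquiv.symm_apply_eq]
  change φ k = ψ (of _ k)
  exact (liftAlgHom_of _ φ _ _ k).symm

end Field

end AdjoinRoot

/-- For `f` irreducible and separable, `K := R[x]/(f)`, `A := R[x]/(f^n)`: the algebra `A`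
admits a `K`-algebra structure, and with it `A ≅ K[y]/(y^n)` as `K`-algebras. -/
theorem stmt12 (R : Type) [Field R] (f : Polynomial R) (hf : Irreducible f)
    (hsep : f.Separable) (n : ℕ) :
    ∃ alg : Algebra (Polynomial R ⧸ Ideal.span {f}) (Polynomial R ⧸ Ideal.span {f ^ n}),
      Nonempty (@AlgEquiv (Polynomial R ⧸ Ideal.span {f}) (Polynomial R ⧸ Ideal.span {f ^ n})
        (Polynomial (Polynomial R ⧸ Ideal.span {f}) ⧸
          Ideal.span {(Polynomial.X : Polynomial (Polynomial R ⧸ Ideal.span {f})) ^ n})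
        _ _ (by refine (@Ideal.Quotient.ring _ _ _ ?_).toSemiring
                exact @Ideal.instIsTwoSided _ Polynomial.commSemiring _)
        alg (by refine @Ideal.Quotient.algebra _ _ _ _ _ _ ?_)) :=
  AdjoinRoot.exists_algebra_nonempty_algEquiv_X_pow hf hsep n
end

section
/- Let R be a field and c ∈ M_n(R) with m_c(x) = p_c(x) (minimal polynomial equals characteristic polynomial). Then R^n ≅ R[c] as R[c]-modules, i.e., R^n is a cyclic module over R[c]. -/
/-!
Over the PID `R[X]`, the finite torsion module `R^n` (with `X` acting as `c`) has an element `v`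
whose annihilator is the annihilator `(m_c)` of the whole module. Hence `a ↦ a v` is an injective
`R[c]`-linear map `R[c] → R^n`, and it is onto because `dim R[c] = deg m_c = deg p_c = n`.
-/

open Polynomial Module

theorem Module.End.exists_minpoly_dvd_of_aeval_apply_eq_zero {K V : Type*} [Field K]
    [AddCommGroup V] [Module K V] [FiniteDimensional K V] (f : Module.End K V) :
    ∃ v : V, ∀ p : K[X], aeval f p v = 0 → minpoly K f ∣ p := by
  obtain ⟨x, hx⟩ := exists_ker_toSpanSingleton_eq_annihilator K[X] (AEval' f)
  rw [← span_minpoly_eq_annihilator] at hx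
  obtain ⟨v, rfl⟩ := (AEval'.of f).surjective x
  refine ⟨v, fun p hp => ?_⟩
  rw [← Ideal.mem_span_singleton, ← hx, LinearMap.mem_ker, LinearMap.toSpanSingleton_apply]
  show AEval'.of f (aeval f p v) = 0
  rw [hp, map_zero]

theorem Algebra.finrank_adjoin_singleton_eq_natDegree_minpoly {K S : Type*} [Field K] [Ring S]
    [Algebra K S] {x : S} (hx : IsIntegral K x) :
    finrank K (Algebra.adjoin K ({x} : Set S)) = (minpoly K x).natDegree := by
  have e : AdjoinRoot (minpoly K x) ≃ₐ[K] (aeval x).range :=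
    (Ideal.quotientEquivAlgOfEq K <| by
        rw [AlgHom.ker_rangeRestrict, minpoly.ker_aeval_eq_span_minpoly]).trans
      (Ideal.quotientKerAlgEquivOfSurjective (aeval x).rangeRestrict_surjective)
  rw [Algebra.adjoin_singleton_eq_range_aeval, ← e.toLinearEquiv.finrank_eq,
    (AdjoinRoot.powerBasis (minpoly.ne_zero hx)).finrank, AdjoinRoot.powerBasis_dim]

theorem stmt14_general (R : Type) [Field R] (n : ℕ) (c : Matrix (Fin n) (Fin n) R)
    (h : minpoly R c = c.charpoly) :
    letI : Module (Algebra.adjoin R ({c} : Set (Matrix (Fin n) (Fin n) R))) (Fin n → R) :=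
      Module.compHom (Fin n → R)
        ((Matrix.toLinAlgEquiv' :
            Matrix (Fin n) (Fin n) R ≃ₐ[R] Module.End R (Fin n → R)).toAlgHom.toRingHom.comp
          (Algebra.adjoin R ({c} : Set (Matrix (Fin n) (Fin n) R))).val.toRingHom)
    Nonempty ((Fin n → R) ≃ₗ[Algebra.adjoin R ({c} : Set (Matrix (Fin n) (Fin n) R))]
      (Algebra.adjoin R ({c} : Set (Matrix (Fin n) (Fin n) R)))) := by
  set A := Algebra.adjoin R ({c} : Set (Matrix (Fin n) (Fin n) R))
  let : Module A (Fin n → R) := Module.compHom _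
    ((Matrix.toLinAlgEquiv' : Matrix (Fin n) (Fin n) R ≃ₐ[R] _).toAlgHom.toRingHom.comp
      A.val.toRingHom)
  set f : Module.End R (Fin n → R) := Matrix.toLinAlgEquiv' c
  obtain ⟨v, hv⟩ := Module.End.exists_minpoly_dvd_of_aeval_apply_eq_zero f
  -- the `R`-linear map underlying `LinearMap.toSpanSingleton A _ v`
  let ψ : A →ₗ[R] Fin n → R :=
    LinearMap.applyₗ v ∘ₗ Matrix.toLinAlgEquiv'.toLinearMap ∘ₗ A.val.toLinearMap
  have hinj : Function.Injective ψ := by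
    rw [← LinearMap.ker_eq_bot, LinearMap.ker_eq_bot']
    rintro ⟨a, ha⟩ hav
    obtain ⟨p, rfl⟩ : a ∈ (aeval (R := R) c).range := by
      rwa [← Algebra.adjoin_singleton_eq_range_aeval]
    have hp : aeval f p v = 0 := by
      rw [aeval_algHom_apply]
      exact hav
    refine Subtype.ext ?_
    change aeval c p = 0
    rw [← minpoly.dvd_iff, ← minpoly.algEquiv_eq Matrix.toLinAlgEquiv']
    exact hv p hp
  have hfinrank : finrank R A = finrank R (Fin n → R) := by
    rw [Algebra.finrank_adjoin_singleton_eq_natDegree_minpoly (.of_finite R c), h,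
      Matrix.charpoly_natDegree_eq_dim, finrank_fin_fun, Fintype.card_fin]
  have hbij : Function.Bijective ψ :=
    ⟨hinj, (LinearMap.injective_iff_surjective_of_finrank_eq_finrank hfinrank).mp hinj⟩
  exact ⟨(LinearEquiv.ofBijective (LinearMap.toSpanSingleton A _ v) hbij).symm⟩

set_option synthInstance.maxHeartbeats 400000 in
/-- If the minimal polynomial of `c` equals its characteristic polynomial, then
`R^n ≅ R[c]` as `R[c]`-modules; in particular `R^n` is a cyclic `R[c]`-module. -/
theorem stmt14 (R : Type) [Field R] (n : ℕ) (hn : 0 < n) (c : Matrix (Fin n) (Fin n) R)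
    (h : minpoly R c = c.charpoly) :
    letI : Module (Algebra.adjoin R ({c} : Set (Matrix (Fin n) (Fin n) R))) (Fin n → R) :=
      Module.compHom (Fin n → R)
        ((Matrix.toLinAlgEquiv' :
            Matrix (Fin n) (Fin n) R ≃ₐ[R] Module.End R (Fin n → R)).toAlgHom.toRingHom.comp
          (Algebra.adjoin R ({c} : Set (Matrix (Fin n) (Fin n) R))).val.toRingHom)
    Nonempty ((Fin n → R) ≃ₗ[Algebra.adjoin R ({c} : Set (Matrix (Fin n) (Fin n) R))]
      (Algebra.adjoin R ({c} : Set (Matrix (Fin n) (Fin n) R)))) :=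
  stmt14_general R n c h
end
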